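/- arXiv:2603.00037 — 2 statements merged into one kernel-verified Lean document; each statement's English description precedes it below -/
import Mathlib

section
/- If v, v' ∈ [a, 1-a] for a ∈ (0, 1/2), then the function φ(r) = r - 1 - log r evaluated at r = v'/v satisfies φ(v'/v) ≤ ((1-a)²/(2a⁴)) (v' - v)². -/
/-- For `x ≥ 1`, `log x ≤ (x² - 1)/(2x)`. -/
lemma log_le_aux {x : ℝ} (hx : 1 ≤ x) : Real.log x ≤ (x ^ 2 - 1) / (2 * x) := by
  have hx0 : (0 : ℝ) < x := lt_of_lt_of_le one_pos hx
  have hder : ∀ t ∈ Set.Ioi (1 : ℝ),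
      HasDerivAt (fun s : ℝ => s / 2 - (2 * s)⁻¹ - Real.log s)
        (1 / 2 - -(2 * 1) / (2 * t) ^ 2 - t⁻¹) t := by
    intro t ht
    have ht0 : (0 : ℝ) < t := lt_trans one_pos ht
    have h1 : HasDerivAt (fun s : ℝ => s / 2) (1 / 2) t := (hasDerivAt_id t).div_const 2
    have h2 : HasDerivAt (fun s : ℝ => (2 * s)⁻¹) (-(2 * 1) / (2 * t) ^ 2) t :=
      (((hasDerivAt_id t).const_mul 2)).inv (by positivity)
    have h3 : HasDerivAt Real.log t⁻¹ t := Real.hasDerivAt_log (ne_of_gt ht0)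
    exact (h1.sub h2).sub h3
  have key : MonotoneOn (fun t : ℝ => t / 2 - (2 * t)⁻¹ - Real.log t) (Set.Ici 1) := by
    apply monotoneOn_of_deriv_nonneg (convex_Ici 1)
    · apply ContinuousOn.sub
      · apply ContinuousOn.sub
        · exact (continuousOn_id.div_const 2)
        · apply ContinuousOn.inv₀
          · exact (continuousOn_const.mul continuousOn_id)
          · intro t ht
            have : (1 : ℝ) ≤ t := ht
            positivity
      · apply Real.continuousOn_log.mono
        intro t ht
        have : (1 : ℝ) ≤ t := ht
        simp only [Set.mem_compl_iff, Set.mem_singleton_iff]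
        linarith
    · rw [interior_Ici]
      intro t ht
      exact ((hder t ht).differentiableAt).differentiableWithinAt
    · rw [interior_Ici]
      intro t ht
      rw [((hder t ht).deriv)]
      have ht0 : (0 : ℝ) < t := lt_trans one_pos ht
      have heq : 1 / 2 - -(2 * 1) / (2 * t) ^ 2 - t⁻¹ = (t - 1) ^ 2 / (2 * t ^ 2) := by
        field_simp
        ring
      rw [heq]
      positivity
  have h := key Set.self_mem_Ici (Set.mem_Ici.mpr hx) hx
  simp only [Real.log_one] at h
  norm_num at h
  have heq : (x ^ 2 - 1) / (2 * x) = x / 2 - x⁻¹ * (1 / 2) := by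
    field_simp
  rw [heq]
  linarith

/-- For `x ≥ 1`, `(x - 1) - (x - 1)²/2 ≤ log x`. -/
lemma log_ge_aux {x : ℝ} (hx : 1 ≤ x) : (x - 1) - (x - 1) ^ 2 / 2 ≤ Real.log x := by
  have hder : ∀ t ∈ Set.Ioi (1 : ℝ),
      HasDerivAt (fun s : ℝ => Real.log s + s ^ 2 / 2 - 2 * s)
        (t⁻¹ + 2 * t ^ 1 / 2 - 2 * 1) t := by
    intro t ht
    have ht0 : (0 : ℝ) < t := lt_trans one_pos ht
    have h1 : HasDerivAt Real.log t⁻¹ t := Real.hasDerivAt_log (ne_of_gt ht0)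
    have h2 : HasDerivAt (fun s : ℝ => s ^ 2 / 2) (2 * t ^ 1 / 2) t :=
      ((hasDerivAt_pow 2 t).div_const 2 : HasDerivAt (fun s : ℝ => s ^ 2 / 2) _ t)
    have h3 : HasDerivAt (fun s : ℝ => 2 * s) (2 * 1) t := (hasDerivAt_id t).const_mul 2
    exact (h1.add h2).sub h3
  have key : MonotoneOn (fun t : ℝ => Real.log t + t ^ 2 / 2 - 2 * t) (Set.Ici 1) := by
    apply monotoneOn_of_deriv_nonneg (convex_Ici 1)
    · apply ContinuousOn.sub
      · apply ContinuousOn.add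
        · apply Real.continuousOn_log.mono
          intro t ht
          have : (1 : ℝ) ≤ t := ht
          simp only [Set.mem_compl_iff, Set.mem_singleton_iff]
          linarith
        · exact ((continuousOn_id.pow 2).div_const 2)
      · exact (continuousOn_const.mul continuousOn_id)
    · rw [interior_Ici]
      intro t ht
      exact ((hder t ht).differentiableAt).differentiableWithinAt
    · rw [interior_Ici]
      intro t ht
      rw [((hder t ht).deriv)]
      have ht0 : (0 : ℝ) < t := lt_trans one_pos ht
      have heq : t⁻¹ + 2 * t ^ 1 / 2 - 2 * 1 = (t - 1) ^ 2 / t := by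
        field_simp
        ring
      rw [heq]
      positivity
  have h := key Set.self_mem_Ici (Set.mem_Ici.mpr hx) hx
  simp only [Real.log_one] at h
  norm_num at h
  nlinarith [h]

/-- If `v, v' ∈ [a, 1-a]` with `a ∈ (0, 1/2)`, then
`φ(v'/v) ≤ ((1-a)²/(2a⁴)) (v' - v)²` where `φ(r) = r - 1 - log r`. -/
theorem phi_ratio_bound (a v v' : ℝ) (ha : a ∈ Set.Ioo (0 : ℝ) (1 / 2))
    (hv : v ∈ Set.Icc a (1 - a)) (hv' : v' ∈ Set.Icc a (1 - a)) :
    v' / v - 1 - Real.log (v' / v) ≤ ((1 - a) ^ 2 / (2 * a ^ 4)) * (v' - v) ^ 2 := by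
  obtain ⟨ha0, ha2⟩ := ha
  obtain ⟨hva, hvb⟩ := hv
  obtain ⟨hv'a, hv'b⟩ := hv'
  have hv0 : 0 < v := lt_of_lt_of_le ha0 hva
  have hv'0 : 0 < v' := lt_of_lt_of_le ha0 hv'a
  -- intermediate bound: φ(v'/v) ≤ (v'-v)²/(2a²)
  have hmid : v' / v - 1 - Real.log (v' / v) ≤ (v' - v) ^ 2 / (2 * a ^ 2) := by
    rcases le_total v v' with h | h
    · -- r ≥ 1 case
      have hr : 1 ≤ v' / v := (one_le_div hv0).mpr h
      have hlog := log_ge_aux hr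
      have halg : v' / v - 1 - Real.log (v' / v) ≤ (v' / v - 1) ^ 2 / 2 := by linarith
      have h2 : (v' / v - 1) ^ 2 / 2 = (v' - v) ^ 2 / (2 * v ^ 2) := by
        rw [div_eq_div_iff (by norm_num) (by positivity)]
        field_simp
      rw [h2] at halg
      have h3 : (v' - v) ^ 2 / (2 * v ^ 2) ≤ (v' - v) ^ 2 / (2 * a ^ 2) := by
        apply div_le_div_of_nonneg_left (by positivity) (by positivity)
        nlinarith
      linarith
    · -- r ≤ 1 case: use y = v/v' ≥ 1
      have hy : 1 ≤ v / v' := (one_le_div hv'0).mpr h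
      have hlog := log_le_aux hy
      have hlogeq : Real.log (v' / v) = -Real.log (v / v') := by
        rw [Real.log_div (ne_of_gt hv'0) (ne_of_gt hv0),
          Real.log_div (ne_of_gt hv0) (ne_of_gt hv'0)]
        ring
      rw [hlogeq]
      have halg : v' / v - 1 + ((v / v') ^ 2 - 1) / (2 * (v / v')) =
          (v' - v) ^ 2 / (2 * (v * v')) := by
        field_simp
        ring
      have h3 : (v' - v) ^ 2 / (2 * (v * v')) ≤ (v' - v) ^ 2 / (2 * a ^ 2) := by
        apply div_le_div_of_nonneg_left (by positivity) (by positivity)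
        nlinarith
      linarith
  -- final step: (v'-v)²/(2a²) ≤ ((1-a)²/(2a⁴)) (v'-v)²
  have hfin : (v' - v) ^ 2 / (2 * a ^ 2) ≤ ((1 - a) ^ 2 / (2 * a ^ 4)) * (v' - v) ^ 2 := by
    have heq : (v' - v) ^ 2 / (2 * a ^ 2) = (a ^ 2 / (2 * a ^ 4)) * (v' - v) ^ 2 := by
      field_simp
    rw [heq]
    have haa : a ^ 2 ≤ (1 - a) ^ 2 := by nlinarith
    gcongr
  linarith
end

section
/- Let a ∈ (0, 1/2), D ≥ 1, x₀ ∈ ℝ^D, and ᾱ, ᾱ' ∈ [a, 1-a]. Then D_KL(N(√ᾱ' x₀, (1-ᾱ')I) ‖ N(√ᾱ x₀, (1-ᾱ)I)) ≤ [D(1-a)²/(4a⁴) + ‖x₀‖²/(8a²)] · |ᾱ' - ᾱ|². -/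
/-!
Both variances `1 - ᾱ`, `1 - ᾱ'` lie in `[a, 1 - a]`. The variance term `u - 1 - log u` at
`u = v'/v` is controlled by `log u ≥ 2(u - 1)/(u + 1)` for `u ≥ 1` and `log u ≥ (u - u⁻¹)/2` for
`u ≤ 1`, giving `(v' - v)²/(2a²)`. The mean term is `(√ᾱ' - √ᾱ)²‖x₀‖²/(1 - ᾱ)`, where
`√ᾱ' - √ᾱ = (ᾱ' - ᾱ)/(√ᾱ' + √ᾱ)` and `√ᾱ' + √ᾱ ≥ 2√a`. The variance part thus gets the constant
`D/(4a²)`, which is at most the stated `D(1 - a)²/(4a⁴)` because `a ≤ 1 - a`.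
-/

/-- KL divergence between the isotropic Gaussians `N(μ', v'I)` and `N(μ, vI)` on `ℝ^D`:
`½ [D (v'/v - 1 - log(v'/v)) + ‖μ' - μ‖²/v]`. -/
noncomputable def klIso (D : ℕ) (μ μ' : EuclideanSpace ℝ (Fin D)) (v v' : ℝ) : ℝ :=
  (1 / 2) * ((D : ℝ) * (v' / v - 1 - Real.log (v' / v)) + ‖μ' - μ‖ ^ 2 / v)

namespace Real

lemma two_mul_sub_one_div_add_one_le_log {w : ℝ} (hw : 1 ≤ w) :
    2 * (w - 1) / (w + 1) ≤ log w := by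
  have h := le_log_one_add_of_nonneg (sub_nonneg.2 hw)
  rwa [add_sub_cancel, sub_add_eq_add_sub, add_sub_assoc, show (2 : ℝ) - 1 = 1 by norm_num] at h

/-- The `n = 0` case of `Real.log_div_le_sum_range_add`, after substituting
`w = (1 + x) / (1 - x)`. -/
lemma log_le_sub_inv_div_two {w : ℝ} (hw : 1 ≤ w) : log w ≤ (w - w⁻¹) / 2 := by
  have hw₀ : 0 < w := by linarith
  set x := (w - 1) / (w + 1) with hx
  have hx₀ : 0 ≤ x := by positivity
  have hx₁ : x < 1 := by rw [hx, div_lt_one (by linarith)]; linarith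
  have hwx : (1 + x) / (1 - x) = w := by rw [hx]; field_simp; ring
  have h := log_div_le_sum_range_add hx₀ hx₁ 0
  rw [hwx, Finset.sum_range_zero, zero_add, pow_one] at h
  calc log w ≤ 2 * (x / (1 - x ^ 2)) := by linarith
    _ = (w - w⁻¹) / 2 := by
      rw [show 1 - x ^ 2 = 4 * w / (w + 1) ^ 2 by rw [hx]; field_simp; ring, hx]
      field_simp
      ring

lemma div_sub_one_sub_log_div_le {a v v' : ℝ} (ha : 0 < a) (hv : a ≤ v) (hv' : a ≤ v') :
    v' / v - 1 - log (v' / v) ≤ (v' - v) ^ 2 / (2 * a ^ 2) := by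
  have hv₀ : 0 < v := ha.trans_le hv
  have hv'₀ : 0 < v' := ha.trans_le hv'
  rcases le_total v v' with h | h
  · have hlog := two_mul_sub_one_div_add_one_le_log ((one_le_div hv₀).2 h)
    calc v' / v - 1 - log (v' / v) ≤ v' / v - 1 - 2 * (v' / v - 1) / (v' / v + 1) := by linarith
      _ = (v' - v) ^ 2 / (v * (v' + v)) := by field_simp; ring
      _ ≤ (v' - v) ^ 2 / (2 * a ^ 2) :=
        div_le_div_of_nonneg_left (sq_nonneg _) (by positivity) (by nlinarith)
  · have hlog := log_le_sub_inv_div_two ((one_le_div hv'₀).2 h)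
    calc v' / v - 1 - log (v' / v) = v' / v - 1 + log (v / v') := by
          rw [← inv_div, log_inv]; ring
      _ ≤ v' / v - 1 + (v / v' - (v / v')⁻¹) / 2 := by linarith
      _ = (v' - v) ^ 2 / (2 * (v * v')) := by field_simp; ring
      _ ≤ (v' - v) ^ 2 / (2 * a ^ 2) := by gcongr; nlinarith

lemma sqrt_sub_sqrt_sq_le {a x y : ℝ} (ha : 0 < a) (hx : a ≤ x) (hy : a ≤ y) :
    (√y - √x) ^ 2 ≤ (y - x) ^ 2 / (4 * a) := by
  rw [le_div_iff₀ (by positivity)]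
  have hsum : 4 * a ≤ (√y + √x) ^ 2 := by
    have := sqrt_le_sqrt hx
    have := sqrt_le_sqrt hy
    have := sq_sqrt ha.le
    nlinarith [sqrt_nonneg a]
  calc (√y - √x) ^ 2 * (4 * a) ≤ (√y - √x) ^ 2 * (√y + √x) ^ 2 := by gcongr
    _ = (√y ^ 2 - √x ^ 2) ^ 2 := by ring
    _ = (y - x) ^ 2 := by rw [sq_sqrt (by linarith), sq_sqrt (by linarith)]

end Real

open Real

lemma klIso_le {D : ℕ} {μ μ' : EuclideanSpace ℝ (Fin D)} {a v v' : ℝ} (ha : 0 < a)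
    (hv : a ≤ v) (hv' : a ≤ v') :
    klIso D μ μ' v v' ≤ D * (v' - v) ^ 2 / (4 * a ^ 2) + ‖μ' - μ‖ ^ 2 / (2 * a) := by
  have hlog := div_sub_one_sub_log_div_le ha hv hv'
  calc klIso D μ μ' v v' ≤ 1 / 2 * (D * ((v' - v) ^ 2 / (2 * a ^ 2)) + ‖μ' - μ‖ ^ 2 / a) := by
        unfold klIso; gcongr
    _ = D * (v' - v) ^ 2 / (4 * a ^ 2) + ‖μ' - μ‖ ^ 2 / (2 * a) := by ring

theorem kl_schedule_perturbation_bound_general (D : ℕ)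
    (a : ℝ) (ha : a ∈ Set.Ioo (0 : ℝ) (1 / 2))
    (x₀ : EuclideanSpace ℝ (Fin D)) (ᾱ ᾱ' : ℝ)
    (hᾱ : ᾱ ∈ Set.Icc a (1 - a)) (hᾱ' : ᾱ' ∈ Set.Icc a (1 - a)) :
    klIso D (Real.sqrt ᾱ • x₀) (Real.sqrt ᾱ' • x₀) (1 - ᾱ) (1 - ᾱ') ≤
      ((D : ℝ) * (1 - a) ^ 2 / (4 * a ^ 4) + ‖x₀‖ ^ 2 / (8 * a ^ 2)) *
        |ᾱ' - ᾱ| ^ 2 := by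
  obtain ⟨ha₀, ha₁⟩ := ha
  have hmean : ‖√ᾱ' • x₀ - √ᾱ • x₀‖ ^ 2 ≤ (ᾱ' - ᾱ) ^ 2 / (4 * a) * ‖x₀‖ ^ 2 := by
    rw [← sub_smul, norm_smul, mul_pow, norm_eq_abs, sq_abs]
    gcongr
    exact sqrt_sub_sqrt_sq_le ha₀ hᾱ.1 hᾱ'.1
  have hscale : 1 ≤ ((1 - a) / a) ^ 2 := one_le_pow₀ ((one_le_div ha₀).2 (by linarith))
  calc klIso D (√ᾱ • x₀) (√ᾱ' • x₀) (1 - ᾱ) (1 - ᾱ')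
      ≤ D * ((1 - ᾱ') - (1 - ᾱ)) ^ 2 / (4 * a ^ 2) * 1 + ‖√ᾱ' • x₀ - √ᾱ • x₀‖ ^ 2 / (2 * a) := by
        rw [mul_one]; exact klIso_le ha₀ (by linarith [hᾱ.2]) (by linarith [hᾱ'.2])
    _ ≤ D * ((1 - ᾱ') - (1 - ᾱ)) ^ 2 / (4 * a ^ 2) * ((1 - a) / a) ^ 2
          + (ᾱ' - ᾱ) ^ 2 / (4 * a) * ‖x₀‖ ^ 2 / (2 * a) := by gcongr
    _ = _ := by rw [sq_abs]; field_simp; ring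

/-- For `a ∈ (0,1/2)`, `D ≥ 1`, `x₀ ∈ ℝ^D`, and `ᾱ, ᾱ' ∈ [a, 1-a]`,
`D_KL(N(√ᾱ' x₀, (1-ᾱ')I) ‖ N(√ᾱ x₀, (1-ᾱ)I))
  ≤ [D(1-a)²/(4a⁴) + ‖x₀‖²/(8a²)] |ᾱ' - ᾱ|²`. -/
theorem kl_schedule_perturbation_bound (D : ℕ) (hD : 1 ≤ D)
    (a : ℝ) (ha : a ∈ Set.Ioo (0 : ℝ) (1 / 2))
    (x₀ : EuclideanSpace ℝ (Fin D)) (ᾱ ᾱ' : ℝ)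
    (hᾱ : ᾱ ∈ Set.Icc a (1 - a)) (hᾱ' : ᾱ' ∈ Set.Icc a (1 - a)) :
    klIso D (Real.sqrt ᾱ • x₀) (Real.sqrt ᾱ' • x₀) (1 - ᾱ) (1 - ᾱ') ≤
      ((D : ℝ) * (1 - a) ^ 2 / (4 * a ^ 4) + ‖x₀‖ ^ 2 / (8 * a ^ 2)) *
        |ᾱ' - ᾱ| ^ 2 :=
  kl_schedule_perturbation_bound_general D a ha x₀ ᾱ ᾱ' hᾱ hᾱ'
end
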